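/- Let p = [b_1^{a_1} ⋯ b_r^{a_r}] (b_1 ≥ ⋯ ≥ b_r) be a symplectic partition of 2n in which every b_i is even. Then n* = 0, and with P := [p_1 p_1 1] one has the exact identity P^t = p^+; in particular (P^t)_{SO_{2n+1}} = (p^+)_{SO_{2n+1}}. -/

import Mathlib

namespace JiangWF

/-- `sCount p i` : the number of parts of `p` that are `≥ i`. -/
def sCount (p : Multiset ℕ) (i : ℕ) : ℕ := (p.filter (fun a => i ≤ a)).card

/-- `rCount p i` : the number of parts of `p` equal to `i`. -/
def rCount (p : Multiset ℕ) (i : ℕ) : ℕ := p.count i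

/-- The largest part of `p` (`0` for the empty partition). -/
def maxPart (p : Multiset ℕ) : ℕ := p.sup

/-- The smallest part of `p` (`0` for the empty partition). -/
noncomputable def minPart (p : Multiset ℕ) : ℕ := sInf {a : ℕ | a ∈ p}

/-- The transpose partition: its `i`-th part is `sCount p i`, for `1 ≤ i ≤ maxPart p`. -/
def transpose (p : Multiset ℕ) : Multiset ℕ :=
  (Multiset.range (maxPart p)).map fun i => sCount p (i + 1)

/-- The sum of the `m` largest parts of `p`. -/
def topSum (p : Multiset ℕ) (m : ℕ) : ℕ :=
  ∑ i ∈ Finset.Icc 1 p.sum, min m (sCount p i)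

/-- Dominance order: `domLE p q` means `p ≤ q`. -/
def domLE (p q : Multiset ℕ) : Prop := ∀ m, topSum p m ≤ topSum q m

/-- `p` is a partition of `N`: all parts positive, summing to `N`. -/
def IsPartitionOf (p : Multiset ℕ) (N : ℕ) : Prop := (∀ a ∈ p, 0 < a) ∧ p.sum = N

/-- Symplectic partition: every odd part occurs with even multiplicity. -/
def IsSymplectic (p : Multiset ℕ) : Prop := ∀ a, a % 2 = 1 → Even (p.count a)

/-- Orthogonal partition: every even part occurs with even multiplicity. -/
def IsOrthogonal (p : Multiset ℕ) : Prop := ∀ a, a % 2 = 0 → Even (p.count a)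

/-- `p^-`: decrease the smallest part by one (deleting it if it becomes `0`). -/
noncomputable def pMinus (p : Multiset ℕ) : Multiset ℕ :=
  if minPart p ≤ 1 then p.erase (minPart p)
  else (minPart p - 1) ::ₘ p.erase (minPart p)

/-- `p^+`: increase the largest part by one. -/
def pPlus (p : Multiset ℕ) : Multiset ℕ := (maxPart p + 1) ::ₘ p.erase (maxPart p)

/-- `p^{+-}`: increase the largest part by one and decrease the smallest by one. -/
noncomputable def pPM (p : Multiset ℕ) : Multiset ℕ := pMinus (pPlus p)

/-- `p₁ = [⌊b_1/2⌋^{a_1} ⋯ ⌊b_r/2⌋^{a_r}]^t` (discarding zero entries before transposing). -/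
def pOne (p : Multiset ℕ) : Multiset ℕ :=
  transpose ((p.map fun b => b / 2).filter fun x => 0 < x)

/-- `Σ_{i : b_i odd} a_i`: the number of odd parts of `p`. -/
def oddMult (p : Multiset ℕ) : ℕ := (p.filter fun a => a % 2 = 1).card

/-- `n* = ⌊(Σ_{i : b_i odd} a_i)/2⌋`. -/
def nStar (p : Multiset ℕ) : ℕ := oddMult p / 2

/-- Append an extra part `m` to `q`, omitted if `m = 0`. -/
def addPart (m : ℕ) (q : Multiset ℕ) : Multiset ℕ := if m = 0 then q else m ::ₘ q

/-- `c` is the `Sp`-collapse of `p`: the maximal symplectic partition `≤ p` in dominance. -/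
def IsSpCollapse (p c : Multiset ℕ) : Prop :=
  IsPartitionOf c p.sum ∧ IsSymplectic c ∧ domLE c p ∧
    ∀ c', IsPartitionOf c' p.sum → IsSymplectic c' → domLE c' p → domLE c' c

/-- `c` is the `SO`-collapse of `p`: the maximal orthogonal partition `≤ p` in dominance. -/
def IsSOCollapse (p c : Multiset ℕ) : Prop :=
  IsPartitionOf c p.sum ∧ IsOrthogonal c ∧ domLE c p ∧
    ∀ c', IsPartitionOf c' p.sum → IsOrthogonal c' → domLE c' p → domLE c' c

/-- `e` is the `Sp`-expansion of `p`: the minimal special symplectic partition `≥ p`. -/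
def IsSpExpansion (p e : Multiset ℕ) : Prop :=
  IsPartitionOf e p.sum ∧ IsSymplectic e ∧ IsSymplectic (transpose e) ∧ domLE p e ∧
    ∀ e', IsPartitionOf e' p.sum → IsSymplectic e' → IsSymplectic (transpose e') →
      domLE p e' → domLE e e'

/-- `e` is the `SO_{2n+1}`-expansion of `p`: the minimal special orthogonal partition `≥ p`
(odd case: special means the transpose is orthogonal). -/
def IsSOOddExpansion (p e : Multiset ℕ) : Prop :=
  IsPartitionOf e p.sum ∧ IsOrthogonal e ∧ IsOrthogonal (transpose e) ∧ domLE p e ∧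
    ∀ e', IsPartitionOf e' p.sum → IsOrthogonal e' → IsOrthogonal (transpose e') →
      domLE p e' → domLE e e'

/-- `e` is the `SO_{2n}`-expansion of `p`: the minimal special orthogonal partition `≥ p`
(even case: special means the transpose is symplectic). -/
def IsSOEvenExpansion (p e : Multiset ℕ) : Prop :=
  IsPartitionOf e p.sum ∧ IsOrthogonal e ∧ IsSymplectic (transpose e) ∧ domLE p e ∧
    ∀ e', IsPartitionOf e' p.sum → IsOrthogonal e' → IsSymplectic (transpose e') →
      domLE p e' → domLE e e'

/-- `dim_C(q)` for a symplectic partition `q` of `2k`: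
`2k² + k − (1/2)Σ s_i(q)² − (1/2)Σ_{i odd} r_i(q)` (note `2k² + k = (|q|² + |q|)/2`). -/
def dimC (p : Multiset ℕ) : ℚ :=
  ((p.sum : ℚ) ^ 2 + (p.sum : ℚ)) / 2
    - (∑ i ∈ Finset.Icc 1 p.sum, (sCount p i : ℚ) ^ 2) / 2
    - (∑ i ∈ Finset.Icc 1 p.sum, if i % 2 = 1 then (rCount p i : ℚ) else 0) / 2

/-- `dim_B(q)` for an orthogonal partition `q` of `2k+1`:
`2k² + k − (1/2)Σ s_i(q)² + (1/2)Σ_{i odd} r_i(q)` (note `2k² + k = (|q|² − |q|)/2`). -/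
def dimB (p : Multiset ℕ) : ℚ :=
  ((p.sum : ℚ) ^ 2 - (p.sum : ℚ)) / 2
    - (∑ i ∈ Finset.Icc 1 p.sum, (sCount p i : ℚ) ^ 2) / 2
    + (∑ i ∈ Finset.Icc 1 p.sum, if i % 2 = 1 then (rCount p i : ℚ) else 0) / 2

/-- `dim_D(q)` for an orthogonal partition `q` of `2k`:
`2k² − k − (1/2)Σ s_i(q)² + (1/2)Σ_{i odd} r_i(q)` (note `2k² − k = (|q|² − |q|)/2`). -/
def dimD (p : Multiset ℕ) : ℚ :=
  ((p.sum : ℚ) ^ 2 - (p.sum : ℚ)) / 2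
    - (∑ i ∈ Finset.Icc 1 p.sum, (sCount p i : ℚ) ^ 2) / 2
    + (∑ i ∈ Finset.Icc 1 p.sum, if i % 2 = 1 then (rCount p i : ℚ) else 0) / 2

/-!
Write `p = 2q`. Since `s_i(2q) = s_{⌈i/2⌉}(q)`, the columns of the Young diagram of `p` are
those of `q`, each repeated twice, so `p^t = [p₁ p₁]`; and enlarging the first row adds a
column of height one, so `(p^+)^t = [p^t 1] = P`. Transposing once more gives `P^t = p^+`.
Both `SO`-collapses are then collapses of the same partition, and a collapse is unique because
dominance is antisymmetric: `topSum r (m + 1) - topSum r m = s_{m+1}(r^t)`, so dominance in both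
directions recovers `r^t`, hence `r`.
-/

lemma sCount_anti (p : Multiset ℕ) {i j : ℕ} (h : i ≤ j) : sCount p j ≤ sCount p i :=
  Multiset.card_le_card (Multiset.monotone_filter_right p fun _ hb => h.trans hb)

lemma le_maxPart_of_mem {p : Multiset ℕ} {a : ℕ} (ha : a ∈ p) : a ≤ maxPart p :=
  Multiset.le_sup ha

lemma maxPart_le_sum (p : Multiset ℕ) : maxPart p ≤ p.sum :=
  Multiset.sup_le.mpr fun _ ha => Multiset.le_sum_of_mem ha

lemma maxPart_mem {p : Multiset ℕ} (h : p ≠ 0) : maxPart p ∈ p := by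
  induction p using Multiset.induction with
  | empty => exact absurd rfl h
  | cons a s ih =>
    rw [maxPart, Multiset.sup_cons]
    rcases eq_or_ne s 0 with rfl | hs
    · simp
    · rcases le_total a s.sup with h | h
      · rw [sup_eq_right.mpr h]; exact Multiset.mem_cons_of_mem (ih hs)
      · rw [sup_eq_left.mpr h]; exact Multiset.mem_cons_self a s

lemma sCount_eq_zero_of_maxPart_lt (p : Multiset ℕ) {i : ℕ} (h : maxPart p < i) :
    sCount p i = 0 := by
  rw [sCount, Multiset.card_eq_zero, Multiset.filter_eq_nil]
  exact fun a ha hia => absurd (le_maxPart_of_mem ha) (by omega)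

lemma sCount_pos {p : Multiset ℕ} {i : ℕ} (hi : 1 ≤ i) (h : i ≤ maxPart p) :
    0 < sCount p i := by
  have hp : p ≠ 0 := by rintro rfl; simp [maxPart] at h; omega
  exact Multiset.card_pos_iff_exists_mem.mpr
    ⟨_, Multiset.mem_filter.mpr ⟨maxPart_mem hp, h⟩⟩

lemma sCount_cons (a : ℕ) (s : Multiset ℕ) (i : ℕ) :
    sCount (a ::ₘ s) i = (if i ≤ a then 1 else 0) + sCount s i := by
  rw [sCount, sCount, Multiset.filter_cons, Multiset.card_add, apply_ite Multiset.card]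
  simp

lemma sCount_eq_count_add_sCount_succ (p : Multiset ℕ) (a : ℕ) :
    sCount p a = p.count a + sCount p (a + 1) := by
  have hsplit := Multiset.filter_add_filter (fun x => a = x) (fun x => a + 1 ≤ x) p
  have hor : p.filter (fun x => a = x ∨ a + 1 ≤ x) = p.filter (a ≤ ·) :=
    Multiset.filter_congr fun _ _ => by omega
  have hand : p.filter (fun x => a = x ∧ a + 1 ≤ x) = 0 :=
    Multiset.filter_eq_nil.mpr fun _ _ => by omega
  rw [sCount, sCount, Multiset.count_eq_card_filter_eq, ← Multiset.card_add, hsplit, hor, hand,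
    add_zero]

lemma eq_of_sCount_eq {p q : Multiset ℕ} (hp : ∀ a ∈ p, 0 < a) (hq : ∀ a ∈ q, 0 < a)
    (h : ∀ i, 1 ≤ i → sCount p i = sCount q i) : p = q := by
  ext a
  rcases Nat.eq_zero_or_pos a with rfl | ha
  · rw [Multiset.count_eq_zero_of_notMem fun h0 => (hp 0 h0).false,
      Multiset.count_eq_zero_of_notMem fun h0 => (hq 0 h0).false]
  · have := h a ha
    have := h (a + 1) (by omega)
    have := sCount_eq_count_add_sCount_succ p a
    have := sCount_eq_count_add_sCount_succ q a
    omega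

lemma lt_card_filter_range_iff {P : ℕ → Prop} [DecidablePred P]
    (hP : ∀ i j, i ≤ j → P j → P i) (M k : ℕ) :
    k < ((Finset.range M).filter P).card ↔ k < M ∧ P k := by
  constructor
  · intro hk
    refine ⟨hk.trans_le ((Finset.card_filter_le _ _).trans (Finset.card_range M).le), ?_⟩
    by_contra hPk
    have hsub : (Finset.range M).filter P ⊆ Finset.range k := fun j hj => by
      simp only [Finset.mem_filter, Finset.mem_range] at hj ⊢
      by_contra hjk
      exact hPk (hP k j (by omega) hj.2)
    have := Finset.card_le_card hsub
    rw [Finset.card_range] at this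
    omega
  · rintro ⟨hkM, hPk⟩
    have hsub : Finset.range (k + 1) ⊆ (Finset.range M).filter P := fun j hj => by
      rw [Finset.mem_range] at hj
      exact Finset.mem_filter.mpr ⟨Finset.mem_range.mpr (by omega), hP j k (by omega) hPk⟩
    have := Finset.card_le_card hsub
    rw [Finset.card_range] at this
    omega

lemma sCount_transpose (p : Multiset ℕ) (k : ℕ) :
    sCount (transpose p) k =
      ((Finset.range (maxPart p)).filter (fun j => k ≤ sCount p (j + 1))).card := by
  rw [sCount, transpose, ← Multiset.countP_eq_card_filter, Multiset.countP_map]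
  rfl

lemma sCount_transpose_eq_card_filter_range {p : Multiset ℕ} {M k : ℕ} (hM : maxPart p ≤ M)
    (hk : 1 ≤ k) :
    sCount (transpose p) k = ((Finset.range M).filter (fun j => k ≤ sCount p (j + 1))).card := by
  rw [sCount_transpose]
  congr 1
  ext j
  simp only [Finset.mem_filter, Finset.mem_range]
  refine ⟨fun h => ⟨by omega, h.2⟩, fun h => ⟨?_, h.2⟩⟩
  by_contra hj
  have := sCount_eq_zero_of_maxPart_lt p (i := j + 1) (by omega)
  omega

lemma le_sCount_transpose_iff (p : Multiset ℕ) {k i : ℕ} (hk : 1 ≤ k) (hi : 1 ≤ i) :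
    i ≤ sCount (transpose p) k ↔ k ≤ sCount p i := by
  have h := lt_card_filter_range_iff (P := (fun j => k ≤ sCount p (j + 1)))
    (fun a b hab h => h.trans (sCount_anti p (by omega))) (maxPart p) (i - 1)
  rw [Nat.sub_add_cancel hi] at h
  rw [sCount_transpose]
  constructor
  · intro hle
    exact (h.mp (by omega)).2
  · intro hks
    have hi' : i ≤ maxPart p := by
      by_contra hlt
      have := sCount_eq_zero_of_maxPart_lt p (i := i) (by omega)
      omega
    have := h.mpr ⟨by omega, hks⟩
    omega

lemma transpose_pos (p : Multiset ℕ) : ∀ a ∈ transpose p, 0 < a := by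
  intro a ha
  obtain ⟨i, hi, rfl⟩ := Multiset.mem_map.mp ha
  exact sCount_pos (by omega) (by rw [Multiset.mem_range] at hi; omega)

lemma transpose_transpose {p : Multiset ℕ} (hp : ∀ a ∈ p, 0 < a) :
    transpose (transpose p) = p := by
  refine eq_of_sCount_eq (transpose_pos _) hp fun i hi => eq_of_forall_le_iff fun k => ?_
  rcases Nat.eq_zero_or_pos k with rfl | hk
  · simp
  · rw [le_sCount_transpose_iff _ hi hk, le_sCount_transpose_iff _ hk hi]

lemma transpose_injective {p q : Multiset ℕ} (hp : ∀ a ∈ p, 0 < a) (hq : ∀ a ∈ q, 0 < a)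
    (h : transpose p = transpose q) : p = q := by
  rw [← transpose_transpose hp, h, transpose_transpose hq]

lemma topSum_eq_sum_range (p : Multiset ℕ) (m : ℕ) :
    topSum p m = ∑ j ∈ Finset.range p.sum, min m (sCount p (j + 1)) := by
  rw [topSum, ← Finset.Ico_add_one_right_eq_Icc, Finset.sum_Ico_eq_sum_range, Nat.add_sub_cancel]
  simp only [add_comm 1]

lemma topSum_succ (p : Multiset ℕ) (m : ℕ) :
    topSum p (m + 1) = topSum p m + sCount (transpose p) (m + 1) := by
  rw [sCount_transpose_eq_card_filter_range (maxPart_le_sum p) (Nat.le_add_left 1 m),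
    topSum_eq_sum_range, topSum_eq_sum_range, Finset.card_filter, ← Finset.sum_add_distrib]
  refine Finset.sum_congr rfl fun j _ => ?_
  split_ifs <;> omega

lemma domLE_antisymm {p q : Multiset ℕ} (hp : ∀ a ∈ p, 0 < a) (hq : ∀ a ∈ q, 0 < a)
    (hpq : domLE p q) (hqp : domLE q p) : p = q := by
  have htop (m : ℕ) : topSum p m = topSum q m := (hpq m).antisymm (hqp m)
  refine transpose_injective hp hq <| eq_of_sCount_eq (transpose_pos p) (transpose_pos q) ?_
  intro k hk
  obtain ⟨m, rfl⟩ : ∃ m, k = m + 1 := ⟨k - 1, by omega⟩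
  have := topSum_succ p m
  have := topSum_succ q m
  have := htop m
  have := htop (m + 1)
  omega

lemma IsSOCollapse.unique {p c₁ c₂ : Multiset ℕ} (h₁ : IsSOCollapse p c₁)
    (h₂ : IsSOCollapse p c₂) : c₁ = c₂ :=
  domLE_antisymm h₁.1.1 h₂.1.1 (h₂.2.2.2 c₁ h₁.1 h₁.2.1 h₁.2.2.1)
    (h₁.2.2.2 c₂ h₂.1 h₂.2.1 h₂.2.2.1)

lemma maxPart_erase_le (p : Multiset ℕ) (a : ℕ) : maxPart (p.erase a) ≤ maxPart p :=
  Multiset.sup_le.mpr fun _ hb => le_maxPart_of_mem (Multiset.mem_of_mem_erase hb)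

lemma maxPart_pPlus (p : Multiset ℕ) : maxPart (pPlus p) = maxPart p + 1 := by
  rw [pPlus, maxPart, Multiset.sup_cons, sup_eq_left]
  exact (maxPart_erase_le p _).trans (Nat.le_succ _)

lemma sCount_pPlus (p : Multiset ℕ) {i : ℕ} (hi : 1 ≤ i) :
    sCount (pPlus p) i = sCount p i + if i = maxPart p + 1 then 1 else 0 := by
  rcases eq_or_ne p 0 with rfl | hp
  · simp only [pPlus, maxPart, Multiset.sup_zero, bot_eq_zero', Multiset.erase_zero, sCount_cons]
    simp only [sCount, Multiset.filter_zero, Multiset.card_zero]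
    split_ifs <;> omega
  · have hrest : sCount (p.erase (maxPart p)) (maxPart p + 1) = 0 :=
      sCount_eq_zero_of_maxPart_lt _ (Nat.lt_succ_of_le (maxPart_erase_le p _))
    have hsplit :
        sCount p i = (if i ≤ maxPart p then 1 else 0) + sCount (p.erase (maxPart p)) i := by
      rw [← sCount_cons, Multiset.cons_erase (maxPart_mem hp)]
    rw [pPlus, sCount_cons, hsplit]
    split_ifs <;> subst_vars <;> omega

lemma pPlus_pos {p : Multiset ℕ} (hp : ∀ a ∈ p, 0 < a) : ∀ a ∈ pPlus p, 0 < a := by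
  intro a ha
  rcases Multiset.mem_cons.mp ha with rfl | ha
  · omega
  · exact hp a (Multiset.mem_of_mem_erase ha)

lemma transpose_pPlus (p : Multiset ℕ) : transpose (pPlus p) = 1 ::ₘ transpose p := by
  rw [transpose, maxPart_pPlus, Multiset.range_succ, Multiset.map_cons, transpose,
    sCount_pPlus p (Nat.le_add_left 1 _), sCount_eq_zero_of_maxPart_lt p (Nat.lt_succ_self _),
    if_pos rfl]
  refine congrArg _ (Multiset.map_congr rfl fun i hi => ?_)
  rw [Multiset.mem_range] at hi
  rw [sCount_pPlus p (Nat.le_add_left 1 i), if_neg (by omega), add_zero]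

lemma map_range_two_mul_div_two (f : ℕ → ℕ) (K : ℕ) :
    (Multiset.range (2 * K)).map (fun i => f (i / 2))
      = (Multiset.range K).map f + (Multiset.range K).map f := by
  induction K with
  | zero => simp
  | succ K ih =>
    rw [show 2 * (K + 1) = 2 * K + 1 + 1 by ring, Multiset.range_succ, Multiset.range_succ,
      Multiset.map_cons, Multiset.map_cons, ih, Multiset.range_succ, Multiset.map_cons,
      Multiset.cons_add, Multiset.add_cons, show (2 * K + 1) / 2 = K by omega,
      show 2 * K / 2 = K by omega]

lemma maxPart_map_two_mul (q : Multiset ℕ) : maxPart (q.map (2 * ·)) = 2 * maxPart q := by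
  induction q using Multiset.induction with
  | empty => simp [maxPart]
  | cons a s ih =>
    simp only [maxPart] at ih ⊢
    rw [Multiset.map_cons, Multiset.sup_cons, Multiset.sup_cons, ih]
    omega

lemma sCount_map_two_mul (q : Multiset ℕ) (j : ℕ) :
    sCount (q.map (2 * ·)) j = sCount q ((j + 1) / 2) := by
  rw [sCount, sCount, ← Multiset.countP_eq_card_filter, Multiset.countP_map]
  exact congrArg _ (Multiset.filter_congr fun _ _ => by omega)

lemma transpose_map_two_mul (q : Multiset ℕ) :
    transpose (q.map (2 * ·)) = transpose q + transpose q := by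
  rw [transpose, transpose, maxPart_map_two_mul, ← map_range_two_mul_div_two]
  refine Multiset.map_congr rfl fun i _ => ?_
  rw [sCount_map_two_mul]
  congr 1
  omega

lemma pOne_add_pOne_of_even {p : Multiset ℕ} (hpos : ∀ a ∈ p, 0 < a)
    (heven : ∀ a ∈ p, a % 2 = 0) : pOne p + pOne p = transpose p := by
  have hhalf : (p.map (· / 2)).filter (0 < ·) = p.map (· / 2) :=
    Multiset.filter_eq_self.mpr fun x hx => by
      obtain ⟨a, ha, rfl⟩ := Multiset.mem_map.mp hx
      have := hpos a ha
      have := heven a ha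
      omega
  have hdouble : (p.map (· / 2)).map (2 * ·) = p := by
    rw [Multiset.map_map]
    conv_rhs => rw [← Multiset.map_id p]
    refine Multiset.map_congr rfl fun a ha => ?_
    have := heven a ha
    simp only [Function.comp_apply, id]
    omega
  rw [pOne, hhalf, ← transpose_map_two_mul, hdouble]

lemma nStar_eq_zero_of_even {p : Multiset ℕ} (heven : ∀ a ∈ p, a % 2 = 0) : nStar p = 0 := by
  rw [nStar, oddMult, Multiset.filter_eq_nil.mpr fun a ha h => by have := heven a ha; omega]
  rfl

theorem transpose_eq_pPlus_of_even_parts_general (n : ℕ) (p : Multiset ℕ)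
    (hp : IsPartitionOf p (2 * n))
    (heven : ∀ a ∈ p, a % 2 = 0) :
    nStar p = 0 ∧ transpose ((1 : ℕ) ::ₘ (pOne p + pOne p)) = pPlus p ∧
      ∀ c₁ c₂ : Multiset ℕ,
        IsSOCollapse (transpose ((1 : ℕ) ::ₘ (pOne p + pOne p))) c₁ →
        IsSOCollapse (pPlus p) c₂ → c₁ = c₂ := by
  have hP : transpose ((1 : ℕ) ::ₘ (pOne p + pOne p)) = pPlus p := by
    rw [pOne_add_pOne_of_even hp.1 heven, ← transpose_pPlus, transpose_transpose (pPlus_pos hp.1)]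
  exact ⟨nStar_eq_zero_of_even heven, hP, fun c₁ c₂ h₁ h₂ => (hP ▸ h₁).unique h₂⟩

/-- `p` a symplectic partition of `2n` all of whose parts are even.
Then `n* = 0` and `P = [p₁ p₁ 1]` satisfies `P^t = p^+`; in particular
`(P^t)_{SO_{2n+1}} = (p^+)_{SO_{2n+1}}`. -/
theorem transpose_eq_pPlus_of_even_parts (n : ℕ) (p : Multiset ℕ)
    (hp : IsPartitionOf p (2 * n)) (hsymp : IsSymplectic p)
    (heven : ∀ a ∈ p, a % 2 = 0) :
    nStar p = 0 ∧ transpose ((1 : ℕ) ::ₘ (pOne p + pOne p)) = pPlus p ∧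
      ∀ c₁ c₂ : Multiset ℕ,
        IsSOCollapse (transpose ((1 : ℕ) ::ₘ (pOne p + pOne p))) c₁ →
        IsSOCollapse (pPlus p) c₂ → c₁ = c₂ :=
  transpose_eq_pPlus_of_even_parts_general n p hp heven

end JiangWF
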